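/- arXiv:2108.01857 — 2 statements merged into one kernel-verified Lean document; each statement's English description precedes it below -/
import Mathlib

section
/- For every real C ≥ 2, 8·(C/2 + (π−1)·√(C/2)) ≤ (1 + π·√(4 + 1/π²))·C + 4π. -/
open Real

theorem stmt_10 (C : ℝ) (hC : 2 ≤ C) :
    8 * (C / 2 + (π - 1) * Real.sqrt (C / 2))
      ≤ (1 + π * Real.sqrt (4 + 1 / π^2)) * C + 4 * π := by
  have hpi := Real.pi_gt_d6
  set s := Real.sqrt (C / 2) with hs
  have hC2 : (0:ℝ) ≤ C / 2 := by linarith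
  have hsq : s ^ 2 = C / 2 := Real.sq_sqrt hC2
  have hs1 : 1 ≤ s := by
    rw [show (1:ℝ) = Real.sqrt 1 by simp [Real.sqrt_one]]
    exact Real.sqrt_le_sqrt (by linarith)
  have h2 : 2 ≤ Real.sqrt (4 + 1 / π ^ 2) := by
    rw [show (2:ℝ) = Real.sqrt 4 by rw [show (4:ℝ) = 2^2 by norm_num, Real.sqrt_sq (by norm_num)]]
    apply Real.sqrt_le_sqrt
    have : 0 ≤ 1 / π ^ 2 := by positivity
    linarith
  have key : 8 * (C / 2 + (π - 1) * s) ≤ (1 + 2 * π) * C + 4 * π := by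
    nlinarith [sq_nonneg ((4*π-6)*s - 4*(π-1)), hpi, hsq, hs1]
  have h3 : (1 + 2 * π) * C + 4 * π ≤ (1 + π * Real.sqrt (4 + 1 / π ^ 2)) * C + 4 * π := by
    have hπ0 : 0 < π := Real.pi_pos
    have h4 : 2 * π ≤ π * Real.sqrt (4 + 1 / π ^ 2) := by nlinarith [h2, hπ0]
    have h5 := mul_le_mul_of_nonneg_right h4 (show (0:ℝ) ≤ C by linarith)
    nlinarith [h5]
  linarith
end

section
/- For every real C with 1 ≤ C ≤ 1850, (1/2)·(17.334 + √(17.334² + 64π·C)) ≥ (4π/11)^{3/4} · C^{3/4}. -/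
open Real

set_option maxHeartbeats 1000000 in
theorem stmt_11 (C : ℝ) (h1 : 1 ≤ C) (h2 : C ≤ 1850) :
    (1 / 2) * (17.334 + Real.sqrt (17.334^2 + 64 * π * C))
      ≥ (4 * π / 11) ^ ((3 : ℝ) / 4) * C ^ ((3 : ℝ) / 4) := by
  have hπl : (3.14159 : ℝ) ≤ π := by linarith [Real.pi_gt_d6]
  have hπu : π ≤ 3.1416 := by linarith [Real.pi_lt_d6]
  have hC0 : (0:ℝ) < C := by linarith
  set t := C ^ ((1:ℝ)/4) with ht
  have ht0 : 0 < t := Real.rpow_pos_of_pos hC0 _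
  have ht4 : t^4 = C := by
    rw [ht, ← Real.rpow_natCast (C ^ ((1:ℝ)/4)) 4, ← Real.rpow_mul hC0.le]
    norm_num
  have hC34 : C ^ ((3:ℝ)/4) = t^3 := by
    rw [ht, ← Real.rpow_natCast (C ^ ((1:ℝ)/4)) 3, ← Real.rpow_mul hC0.le]
    norm_num
  set k := (4*π/11) ^ ((3:ℝ)/4) with hk
  have hb0 : (0:ℝ) < 4*π/11 := by linarith
  have hk0 : 0 < k := Real.rpow_pos_of_pos hb0 _
  have hk4 : k^4 = (4*π/11)^3 := by
    rw [hk, ← Real.rpow_natCast ((4*π/11) ^ ((3:ℝ)/4)) 4, ← Real.rpow_mul hb0.le,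
      ← Real.rpow_natCast (4*π/11) 3]
    norm_num
  have hk4u : k^4 ≤ 1.490921 := by nlinarith [hk4, hπu, hπl, sq_nonneg (π - 3.1416)]
  have hk4l : (1.4909:ℝ) ≤ k^4 := by nlinarith [hk4, hπl, hπu, sq_nonneg (π - 3.14159)]
  have hk2u : k^2 ≤ 1.2211 := by nlinarith [hk4u, sq_nonneg (k^2 - 1.2211), sq_nonneg k]
  have hk2l : (1.2210:ℝ) ≤ k^2 := by nlinarith [hk4l, sq_nonneg (k^2 + 1.2210), sq_nonneg k, sq_nonneg (k^2 - 1.2210)]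
  have hkub : k ≤ 1.1051 := by nlinarith [hk2u, hk0, sq_nonneg (k - 1.1051)]
  have hklb : (1.1049:ℝ) ≤ k := by nlinarith [hk2l, hk0, sq_nonneg (k - 1.1049), sq_nonneg (k + 1.1049)]
  have ht1 : (1:ℝ) ≤ t := Real.one_le_rpow h1 (by norm_num)
  have htub : t ≤ 6.56 := by
    nlinarith [ht4, ht0, ht1, sq_nonneg (t^2 - 6.56^2), sq_nonneg (t - 6.56),
      mul_pos ht0 ht0, mul_pos (mul_pos ht0 ht0) ht0]
  have key : 4*k^2*t^3 ≤ 64*π*t + 69.336*k := by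
    nlinarith [mul_nonneg (mul_nonneg (sub_nonneg.2 ht1) (sub_nonneg.2 htub)) ht0.le,
      mul_nonneg (sub_nonneg.2 ht1) (sub_nonneg.2 htub), hk2u, hklb, hπl, ht0, hkub]
  have key2 : 4*k^2*t^6 ≤ 64*π*t^4 + 69.336*k*t^3 := by
    have h := mul_le_mul_of_nonneg_right key (pow_nonneg ht0.le 3)
    nlinarith [h]
  rw [hC34, ge_iff_le, ← ht4]
  rcases le_or_gt (2*k*t^3) 17.334 with h | h
  · have := Real.sqrt_nonneg (17.334^2 + 64 * π * t^4)
    nlinarith [hk0, pow_pos ht0 3]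
  · have hX : (2*k*t^3 - 17.334) ≤ Real.sqrt (17.334^2 + 64 * π * t^4) := by
      apply Real.le_sqrt_of_sq_le
      nlinarith [key2]
    nlinarith [hX]
end
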